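/- arXiv:2302.00406 — 2 statements merged into one kernel-verified Lean document; each statement's English description precedes it below -/
import Mathlib

section
/- Let $\Phi$ denote the cumulative distribution function of the standard normal distribution, let $\sigma > 0$, let $c_1,\dots,c_n \in \mathbb{R}$, and let $\gamma_{\sigma^2}$ denote the Gaussian measure $N(0,\sigma^2)$ on $\mathbb{R}$. Then $\int_{\mathbb{R}} \prod_{j=1}^{n} \Phi\left(\frac{c_j + w}{\sigma}\right) d\gamma_{\sigma^2}(w) \;\geq\; \prod_{j=1}^{n} \Phi\left(\frac{c_j}{\sqrt{2}\,\sigma}\right)$. -/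
/-!
For two factors this is Chebyshev's integral inequality `∫ f * ∫ g ≤ ∫ f g` for similarly
ordered `f`, `g` under a probability measure, obtained by integrating
`(f x - f y) (g x - g y) ≥ 0` over `μ ⊗ μ`. Every factor `w ↦ Φ((cⱼ + w) / σ)` is monotone
with values in `[0, 1]`, so by induction the integral of the product dominates the product of
the integrals. Each of these is `P(X - W ≤ cⱼ)` for independent `X, W ∼ N(0, σ²)`, and
`X - W ∼ N(0, 2σ²)`.
-/

open MeasureTheory ProbabilityTheory

/-- The cumulative distribution function of the standard normal distribution. -/
noncomputable def stdNormalCDF (z : ℝ) : ℝ := ((gaussianReal 0 1) (Set.Iic z)).toReal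

open scoped NNReal

theorem MeasureTheory.Measure.conv_apply {M : Type*} [AddMonoid M] [MeasurableSpace M]
    [MeasurableAdd₂ M] (μ ν : Measure M) [SFinite ν] {s : Set M} (hs : MeasurableSet s) :
    (μ ∗ ν) s = ∫⁻ x, ν ((x + ·) ⁻¹' s) ∂μ := by
  rw [Measure.conv, Measure.map_apply measurable_add hs, Measure.prod_apply (measurable_add hs)]
  rfl

theorem Monovary.integral_mul_integral_le_integral_mul {α : Type*} [MeasurableSpace α]
    {μ : Measure α} [IsProbabilityMeasure μ] {f g : α → ℝ} (hfg : Monovary f g)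
    (hf : Integrable f μ) (hg : Integrable g μ) (hfg_int : Integrable (fun x ↦ f x * g x) μ) :
    (∫ x, f x ∂μ) * ∫ x, g x ∂μ ≤ ∫ x, f x * g x ∂μ := by
  have hfg_swap : Integrable (fun z : α × α ↦ f z.2 * g z.1) (μ.prod μ) := by
    simpa only [mul_comm] using hg.mul_prod hf
  have h : ∫ z, f z.1 * g z.2 + f z.2 * g z.1 ∂(μ.prod μ) ≤
      ∫ z, f z.1 * g z.1 + f z.2 * g z.2 ∂(μ.prod μ) :=
    integral_mono ((hf.mul_prod hg).add hfg_swap) ((hfg_int.comp_fst μ).add (hfg_int.comp_snd μ))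
      fun z ↦ hfg.mul_add_mul_le_mul_add_mul z.1 z.2
  have h_swap : ∫ z, f z.2 * g z.1 ∂(μ.prod μ) = (∫ x, f x ∂μ) * ∫ x, g x ∂μ := by
    simpa only [mul_comm] using integral_prod_mul (μ := μ) (ν := μ) g f
  rw [integral_add (hf.mul_prod hg) hfg_swap, integral_add (hfg_int.comp_fst μ)
    (hfg_int.comp_snd μ), integral_prod_mul f g, h_swap, integral_fun_fst (fun x ↦ f x * g x),
    integral_fun_snd (fun x ↦ f x * g x)] at h
  simp only [probReal_univ, one_smul] at h
  linarith

section

variable {α : Type*} [TopologicalSpace α] [LinearOrder α] [OrderClosedTopology α]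
  [MeasurableSpace α] [BorelSpace α] {μ : Measure α}

theorem Monotone.integrable_of_mem_Icc [IsFiniteMeasure μ] {f : α → ℝ} (hf : Monotone f)
    (hf01 : ∀ x, f x ∈ Set.Icc 0 1) : Integrable f μ :=
  .of_bound hf.measurable.aestronglyMeasurable 1 <| ae_of_all _ fun x ↦
    abs_le.2 ⟨by linarith [(hf01 x).1], (hf01 x).2⟩

theorem Finset.prod_integral_le_integral_prod [IsProbabilityMeasure μ] {ι : Type*}
    (s : Finset ι) {f : ι → α → ℝ} (hf : ∀ i ∈ s, Monotone (f i))
    (hf01 : ∀ i ∈ s, ∀ x, f i x ∈ Set.Icc 0 1) :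
    ∏ i ∈ s, ∫ x, f i x ∂μ ≤ ∫ x, ∏ i ∈ s, f i x ∂μ := by
  induction s using Finset.cons_induction with
  | empty => simp
  | cons a s _ ih =>
    simp only [Finset.forall_mem_cons] at hf hf01
    have hP : Monotone fun x ↦ ∏ i ∈ s, f i x := fun x y hxy ↦
      Finset.prod_le_prod (fun i hi ↦ (hf01.2 i hi x).1) fun i hi ↦ hf.2 i hi hxy
    have hP01 : ∀ x, ∏ i ∈ s, f i x ∈ Set.Icc 0 1 := fun x ↦
      ⟨Finset.prod_nonneg fun i hi ↦ (hf01.2 i hi x).1,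
        Finset.prod_le_one (fun i hi ↦ (hf01.2 i hi x).1) fun i hi ↦ (hf01.2 i hi x).2⟩
    have hfaP : Monotone fun x ↦ f a x * ∏ i ∈ s, f i x := fun x y hxy ↦
      mul_le_mul (hf.1 hxy) (hP hxy) (hP01 x).1 (hf01.1 y).1
    have hfaP01 : ∀ x, f a x * ∏ i ∈ s, f i x ∈ Set.Icc 0 1 := fun x ↦
      ⟨mul_nonneg (hf01.1 x).1 (hP01 x).1, mul_le_one₀ (hf01.1 x).2 (hP01 x).1 (hP01 x).2⟩
    simp only [Finset.prod_cons]
    calc (∫ x, f a x ∂μ) * ∏ i ∈ s, ∫ x, f i x ∂μ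
        ≤ (∫ x, f a x ∂μ) * ∫ x, ∏ i ∈ s, f i x ∂μ :=
          mul_le_mul_of_nonneg_left (ih hf.2 hf01.2) (integral_nonneg fun x ↦ (hf01.1 x).1)
      _ ≤ ∫ x, f a x * ∏ i ∈ s, f i x ∂μ :=
          (hf.1.monovary hP).integral_mul_integral_le_integral_mul
            (hf.1.integrable_of_mem_Icc hf01.1) (hP.integrable_of_mem_Icc hP01)
            (hfaP.integrable_of_mem_Icc hfaP01)

end

theorem monotone_stdNormalCDF : Monotone stdNormalCDF := fun _ _ h ↦
  ENNReal.toReal_mono (measure_ne_top _ _) (measure_mono (Set.Iic_subset_Iic.2 h))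

theorem stdNormalCDF_mem_Icc (z : ℝ) : stdNormalCDF z ∈ Set.Icc 0 1 :=
  ⟨ENNReal.toReal_nonneg,
    ENNReal.toReal_le_of_le_ofReal zero_le_one (by simpa using prob_le_one)⟩

theorem stdNormalCDF_div_sqrt {v : ℝ≥0} (hv : v ≠ 0) (a : ℝ) :
    stdNormalCDF (a / √v) = (gaussianReal 0 v (Set.Iic a)).toReal := by
  have h_scale : (gaussianReal 0 1).map (√v * ·) = gaussianReal 0 v := by
    rw [gaussianReal_map_const_mul, mul_zero, mul_one]
    congr 1
    ext
    simp
  have h_pos : 0 < √(v : ℝ) := Real.sqrt_pos.2 (NNReal.coe_pos.2 (pos_iff_ne_zero.2 hv))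
  rw [stdNormalCDF, ← h_scale, Measure.map_apply (measurable_const_mul _) measurableSet_Iic]
  congr 3
  ext x
  simp [le_div_iff₀ h_pos, mul_comm]

theorem lintegral_gaussianReal_Iic_add (v v' : ℝ≥0) (c : ℝ) :
    ∫⁻ w, gaussianReal 0 v (Set.Iic (c + w)) ∂gaussianReal 0 v' =
      gaussianReal 0 (v' + v) (Set.Iic c) := by
  have h_neg : (gaussianReal 0 v').map (MeasurableEquiv.neg ℝ) = gaussianReal 0 v' := by
    simpa using gaussianReal_map_neg (μ := 0) (v := v')
  have h_conv := gaussianReal_conv_gaussianReal (m₁ := 0) (m₂ := 0) (v₁ := v') (v₂ := v)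
  rw [zero_add] at h_conv
  rw [← h_neg, lintegral_map_equiv, ← h_conv, Measure.conv_apply _ _ measurableSet_Iic]
  congr! with w
  ext x
  simp [le_sub_iff_add_le]

theorem integral_stdNormalCDF_add_div_sqrt {v : ℝ≥0} (hv : v ≠ 0) (v' : ℝ≥0) (c : ℝ) :
    ∫ w, stdNormalCDF ((c + w) / √v) ∂gaussianReal 0 v' =
      stdNormalCDF (c / √(v + v' : ℝ≥0)) := by
  simp_rw [stdNormalCDF_div_sqrt hv, stdNormalCDF_div_sqrt (v := v + v') (by simp [hv]),
    add_comm v, ← lintegral_gaussianReal_Iic_add]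
  have h_mono : Monotone fun w ↦ gaussianReal 0 v (Set.Iic (c + w)) := fun _ _ h ↦
    measure_mono (Set.Iic_subset_Iic.2 (by linarith))
  exact integral_toReal h_mono.measurable.aemeasurable (ae_of_all _ fun _ ↦ measure_lt_top _ _)

/-- **Lower bound for the batch-preference likelihood.** The Gaussian integral of the product
of probit factors `Φ((cⱼ+w)/σ)` is bounded below by the product of the individual noisy
pairwise-comparison probabilities `Φ(cⱼ/(√2·σ))`. -/
theorem integral_prod_stdNormalCDF_gaussian_ge
    (σ : ℝ) (hσ : 0 < σ) (n : ℕ) (c : Fin n → ℝ) :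
    ∫ w, ∏ j, stdNormalCDF ((c j + w) / σ) ∂(gaussianReal 0 ⟨σ ^ 2, sq_nonneg σ⟩) ≥
      ∏ j, stdNormalCDF (c j / (Real.sqrt 2 * σ)) := by
  set v : ℝ≥0 := ⟨σ ^ 2, sq_nonneg σ⟩
  have hv : v ≠ 0 := by rw [← NNReal.coe_ne_zero]; exact pow_ne_zero 2 hσ.ne'
  have hσ_eq : √(v : ℝ) = σ := Real.sqrt_sq hσ.le
  have h2σ_eq : √((v + v : ℝ≥0) : ℝ) = √2 * σ := by
    rw [NNReal.coe_add, ← two_mul, Real.sqrt_mul zero_le_two, hσ_eq]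
  have h_marginal (j : Fin n) :
      ∫ w, stdNormalCDF ((c j + w) / σ) ∂gaussianReal 0 v =
        stdNormalCDF (c j / (√2 * σ)) := by
    simpa only [hσ_eq, h2σ_eq] using integral_stdNormalCDF_add_div_sqrt hv v (c j)
  calc ∏ j, stdNormalCDF (c j / (√2 * σ))
      = ∏ j, ∫ w, stdNormalCDF ((c j + w) / σ) ∂gaussianReal 0 v := by simp only [h_marginal]
    _ ≤ ∫ w, ∏ j, stdNormalCDF ((c j + w) / σ) ∂gaussianReal 0 v :=
      Finset.univ.prod_integral_le_integral_prod
        (fun j _ ↦ monotone_stdNormalCDF.comp fun x y hxy ↦ by gcongr)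
        fun j _ w ↦ stdNormalCDF_mem_Icc _
end

section
/- Let $\mathcal{X}$ be a set and let $k : \mathcal{X} \times \mathcal{X} \to \mathbb{R}$ be a symmetric positive semidefinite kernel. Define the intransitive preference kernel $k_a$ on pairs by $k_a\big((x_i,x_j),(x'_i,x'_j)\big) = k(x_i,x'_i)\,k(x_j,x'_j) - k(x_i,x'_j)\,k(x'_i,x_j)$. Then $k_a$ is a symmetric positive semidefinite kernel on $\mathcal{X} \times \mathcal{X}$: for all $n$, all pairs $(x_1,y_1),\dots,(x_n,y_n) \in \mathcal{X}\times\mathcal{X}$ and all $c_1,\dots,c_n \in \mathbb{R}$, $\sum_{a=1}^n \sum_{b=1}^n c_a c_b \, k_a\big((x_a,y_a),(x_b,y_b)\big) \geq 0$. -/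
/-- The intransitive preference kernel
`k_a((xᵢ,xⱼ),(xᵢ',xⱼ')) = k(xᵢ,xᵢ')·k(xⱼ,xⱼ') - k(xᵢ,xⱼ')·k(xᵢ',xⱼ)`. -/
def intransPrefKernel {X : Type*} (k : X → X → ℝ) : (X × X) → (X × X) → ℝ :=
  fun p q => k p.1 q.1 * k p.2 q.2 - k p.1 q.2 * k q.1 p.2

/-!
Mathlib's `Matrix.PosSemidef`, for an arbitrary index type, is exactly positive semidefiniteness
of a kernel. By the Schur product theorem the tensor-product kernel
`K((x,y),(x',y')) = k(x,x') k(y,y')` is positive semidefinite, and `2 k_a(p,q)` is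
`K(p,q) - K(p,q.swap) - K(p.swap,q) + K(p.swap,q.swap)`: the Gram matrix of the antisymmetrized
features `φ(x) ⊗ φ(y) - φ(y) ⊗ φ(x)`.
-/

namespace Matrix

theorem posSemidef_iff_forall_fin {X : Type*} {M : Matrix X X ℝ} :
    M.PosSemidef ↔ (∀ x y, M x y = M y x) ∧
      ∀ (n : ℕ) (x : Fin n → X) (c : Fin n → ℝ), 0 ≤ ∑ a, ∑ b, c a * c b * M (x a) (x b) := by
  constructor
  · intro hM
    refine ⟨fun x y ↦ by simpa using hM.isHermitian.apply y x, fun n x c ↦ ?_⟩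
    refine ((hM.submatrix x).dotProduct_mulVec_nonneg c).trans_eq ?_
    simp only [dotProduct, mulVec, submatrix_apply, Pi.star_apply, star_trivial, Finset.mul_sum]
    exact Finset.sum_congr rfl fun a _ ↦ Finset.sum_congr rfl fun b _ ↦ by ring
  · rintro ⟨hsymm, hsum⟩
    refine ⟨Matrix.ext fun x y ↦ by simpa using hsymm y x, fun v ↦ ?_⟩
    let e := v.support.equivFin
    refine (hsum _ (fun a ↦ (e.symm a : X)) (fun a ↦ v (e.symm a))).trans_eq ?_
    simp only [Finsupp.sum, star_trivial, ← Finset.sum_coe_sort v.support]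
    exact Fintype.sum_equiv e.symm _ _ fun a ↦ Fintype.sum_equiv e.symm _ _ fun b ↦ by ring

/-- If `M` is the Gram matrix of a feature map `φ`, this is the Gram matrix of
`z ↦ φ (f z) - φ (g z)`. -/
theorem PosSemidef.submatrix_diff {Y Z R : Type*} [CommRing R] [PartialOrder R] [StarRing R]
    {M : Matrix Y Y R} (hM : M.PosSemidef) (f g : Z → Y) :
    (M.submatrix f f - M.submatrix f g - M.submatrix g f + M.submatrix g g).PosSemidef := by
  refine ⟨?_, fun x ↦ ?_⟩
  · ext i j
    simp only [conjTranspose_apply, sub_apply, add_apply, submatrix_apply, star_sub, star_add,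
      hM.isHermitian.apply]
    abel
  · convert hM.2 (x.mapDomain f - x.mapDomain g) using 1
    simp only [add_apply, sub_apply, submatrix_apply, mul_add, mul_sub, add_mul, sub_mul,
      Finsupp.sum_add, Finsupp.sum_sub, implies_true, Finsupp.sum_sub_index, mul_zero,
      Finsupp.sum_mapDomain_index, star_sub, star_zero, zero_mul, Finsupp.sum_fun_zero, star_add]
    abel

end Matrix

open Matrix in
theorem posSemidef_intransPrefKernel {X : Type*} {k : X → X → ℝ} (hk : (of k).PosSemidef) :
    (of (intransPrefKernel k)).PosSemidef := by
  set K := (of k).submatrix Prod.fst Prod.fst ⊙ (of k).submatrix Prod.snd Prod.snd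
  have hK : K.PosSemidef := (hk.submatrix Prod.fst).hadamard (hk.submatrix Prod.snd)
  have hsymm : ∀ x y, k x y = k y x := fun x y ↦ by simpa using hk.isHermitian.apply y x
  have hdiff : of (intransPrefKernel k) = (2⁻¹ : ℝ) • (K.submatrix id id
      - K.submatrix id Prod.swap - K.submatrix Prod.swap id + K.submatrix Prod.swap Prod.swap) := by
    ext p q
    simp only [K, of_apply, intransPrefKernel, hsymm q.1 p.2, submatrix_id_id, Matrix.smul_apply,
      Matrix.add_apply, Matrix.sub_apply, hadamard_apply, submatrix_apply, id_eq, Prod.fst_swap,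
      Prod.snd_swap, smul_eq_mul]
    ring
  rw [hdiff]
  exact (hK.submatrix_diff id Prod.swap).smul (by norm_num)

/-- **The intransitive preference kernel is symmetric positive semidefinite.** If `k` is a
symmetric positive semidefinite kernel on `X`, then `k_a` is a symmetric positive
semidefinite kernel on `X × X`. -/
theorem intransPrefKernel_symm_posSemidef {X : Type*} (k : X → X → ℝ)
    (h_symm : ∀ x y, k x y = k y x)
    (h_psd : ∀ (n : ℕ) (x : Fin n → X) (c : Fin n → ℝ),
      0 ≤ ∑ a, ∑ b, c a * c b * k (x a) (x b)) :
    (∀ p q : X × X, intransPrefKernel k p q = intransPrefKernel k q p) ∧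
    (∀ (n : ℕ) (p : Fin n → X × X) (c : Fin n → ℝ),
      0 ≤ ∑ a, ∑ b, c a * c b * intransPrefKernel k (p a) (p b)) :=
  Matrix.posSemidef_iff_forall_fin.mp <|
    posSemidef_intransPrefKernel (Matrix.posSemidef_iff_forall_fin.mpr ⟨h_symm, h_psd⟩)
end
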